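/- arXiv:1004.2757 — 3 statements merged into one kernel-verified Lean document; each statement's English description precedes it below -/
import Mathlib

section
/- Let C be an (n,k) linear code over F with k ≥ 1 and systematic generator matrix G = [I_k | P]. Then C is MDS (i.e., d_min(C) = n − k + 1) if and only if every square submatrix of P is nonsingular, i.e., for every nonempty set R of row indices of P and every set T of column indices of P with |R| = |T|, the square submatrix of P formed by the rows in R and the columns in T has nonzero determinant. -/
open Matrix

/-- The minimum Hamming distance of a linear code: the minimum Hamming weight of a
nonzero codeword. -/
noncomputable def dmin {F : Type*} [Field F] [DecidableEq F] {ι : Type*} [Fintype ι]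
    (C : Submodule F (ι → F)) : ℕ :=
  sInf {d | ∃ x ∈ C, x ≠ 0 ∧ hammingNorm x = d}

/-- The row space of a matrix, i.e. the linear code generated by its rows. -/
def rowSpace {F : Type*} [Field F] {κ ι : Type*} (G : Matrix κ ι F) :
    Submodule F (ι → F) :=
  Submodule.span F (Set.range fun i => G i)

/-- The systematic generator matrix `[I_k | P]`. -/
def sysGen {F : Type*} [Field F] [DecidableEq F] {k m : ℕ}
    (P : Matrix (Fin k) (Fin m) F) : Matrix (Fin k) (Fin k ⊕ Fin m) F :=
  Matrix.fromCols 1 P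

lemma mem_rowSpace_iff {F : Type*} [Field F] {κ ι : Type*} [Fintype κ]
    (G : Matrix κ ι F) (x : ι → F) : x ∈ rowSpace G ↔ ∃ u, G.vecMul u = x := by
  rw [rowSpace, show (Set.range fun i => G i) = Set.range G.row from rfl,
    ← _root_.range_vecMulLinear]
  simp [LinearMap.mem_range, Matrix.vecMulLinear_apply]

lemma hammingNorm_sum_elim {F : Type*} [DecidableEq F] [Zero F] {k m : ℕ}
    (a : Fin k → F) (b : Fin m → F) :
    hammingNorm (Sum.elim a b) = hammingNorm a + hammingNorm b := by
  classical
  simp only [hammingNorm, Finset.card_filter, Fintype.sum_sum_type]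
  simp
  congr 1 <;> refine Finset.sum_congr rfl (fun x _ => ?_) <;> split_ifs <;> simp_all

lemma sysGen_vecMul {F : Type*} [Field F] [DecidableEq F] {k m : ℕ}
    (P : Matrix (Fin k) (Fin m) F) (u : Fin k → F) :
    (sysGen P).vecMul u = Sum.elim u (P.vecMul u) := by
  rw [sysGen, Matrix.vecMul_fromCols, Matrix.vecMul_one]

/-- Core counting lemma: if all square submatrices of `P` are nonsingular, every
nonzero message `u` gives a codeword of weight at least `m + 1`. -/
lemma weight_lower {F : Type*} [Field F] [DecidableEq F] {k m : ℕ}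
    (P : Matrix (Fin k) (Fin m) F)
    (hP : ∀ d : ℕ, 0 < d → ∀ (r : Fin d → Fin k) (c : Fin d → Fin m),
        Function.Injective r → Function.Injective c → (P.submatrix r c).det ≠ 0)
    (u : Fin k → F) (hu : u ≠ 0) :
    m + 1 ≤ hammingNorm u + hammingNorm (P.vecMul u) := by
  classical
  set S : Finset (Fin k) := Finset.univ.filter (fun i => u i ≠ 0) with hS
  set s : ℕ := S.card with hs
  have hnormu : hammingNorm u = s := rfl
  have hspos : 0 < s := by
    rcases Function.ne_iff.mp hu with ⟨i, hi⟩
    exact Finset.card_pos.mpr ⟨i, by simpa [hS] using hi⟩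
  set Z : Finset (Fin m) := Finset.univ.filter (fun j => P.vecMul u j = 0) with hZ
  have hZcard : Z.card < s := by
    by_contra hcon
    push_neg at hcon
    obtain ⟨T, hTZ, hT⟩ := Finset.exists_subset_card_eq hcon
    set r : Fin s → Fin k := fun i => S.orderEmbOfFin rfl i with hr
    set c : Fin s → Fin m := fun i => T.orderEmbOfFin hT i with hc
    have hrinj : Function.Injective r := (S.orderEmbOfFin rfl).injective
    have hcinj : Function.Injective c := (T.orderEmbOfFin hT).injective
    set v : Fin s → F := fun i => u (r i) with hv
    have hSmap : S = Finset.univ.map ⟨r, hrinj⟩ := by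
      ext i
      simp only [Finset.mem_map, Finset.mem_univ, true_and, Function.Embedding.coeFn_mk]
      constructor
      · intro hiS
        have : i ∈ Set.range r := by
          rw [hr]
          rw [show (fun i => S.orderEmbOfFin rfl i) = ⇑(S.orderEmbOfFin rfl) from rfl]
          rw [Finset.range_orderEmbOfFin]
          exact hiS
        exact this
      · rintro ⟨j, rfl⟩
        exact Finset.orderEmbOfFin_mem S rfl j
    have hvzero : v ᵥ* (P.submatrix r c) = 0 := by
      funext t
      have h1 : (v ᵥ* (P.submatrix r c)) t = ∑ i ∈ S, u i * P i (c t) := by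
        rw [hSmap, Finset.sum_map]
        rfl
      have h2 : ∑ i ∈ S, u i * P i (c t) = ∑ i : Fin k, u i * P i (c t) := by
        apply Finset.sum_subset (Finset.subset_univ S)
        intro i _ hiS
        have : u i = 0 := by
          by_contra h
          exact hiS (by simp [hS, h])
        simp [this]
      have h3 : (∑ i : Fin k, u i * P i (c t)) = P.vecMul u (c t) := rfl
      have hct : c t ∈ Z := hTZ (Finset.orderEmbOfFin_mem T hT t)
      have h4 : P.vecMul u (c t) = 0 := by
        simpa [hZ] using hct
      simp [h1, h2, h3, h4]
    have hvne : v ≠ 0 := by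
      rcases Finset.card_pos.mp hspos with ⟨i, hiS⟩
      rw [hSmap] at hiS
      simp only [Finset.mem_map, Finset.mem_univ, true_and,
        Function.Embedding.coeFn_mk] at hiS
      rcases hiS with ⟨j, rfl⟩
      intro h0
      have hmem := Finset.orderEmbOfFin_mem S (rfl : S.card = s) j
      exact (Finset.mem_filter.mp hmem).2 (by simpa [hv] using congrFun h0 j)
    have := Matrix.eq_zero_of_vecMul_eq_zero (hP s hspos r c hrinj hcinj) hvzero
    exact hvne this
  have hnormuP : hammingNorm (P.vecMul u) + Z.card = m := by
    have := Finset.card_filter_add_card_filter_not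
      (s := (Finset.univ : Finset (Fin m))) (p := fun j => P.vecMul u j ≠ 0)
    simpa [hammingNorm, hZ, Finset.card_univ] using this
  omega

theorem mds_iff_every_square_submatrix_nonsingular {F : Type*} [Field F] [DecidableEq F]
    {k m : ℕ} (hk : 1 ≤ k) (P : Matrix (Fin k) (Fin m) F) :
    dmin (rowSpace (sysGen P)) = m + 1 ↔
      ∀ d : ℕ, 0 < d → ∀ (r : Fin d → Fin k) (c : Fin d → Fin m),
        Function.Injective r → Function.Injective c →
        (P.submatrix r c).det ≠ 0 := by
  classical
  constructor
  · -- MDS → every square submatrix nonsingular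
    intro hdmin d hd r c hrinj hcinj
    by_contra hdet
    obtain ⟨v, hvne, hvz⟩ := Matrix.exists_vecMul_eq_zero_iff.mpr hdet
    set u : Fin k → F := fun i => ∑ j, if r j = i then v j else 0 with hu
    have hur : ∀ j, u (r j) = v j := by
      intro j
      simp [hu, hrinj.eq_iff]
    have hu0 : ∀ i, i ∉ Set.range r → u i = 0 := by
      intro i hi
      rw [hu]
      apply Finset.sum_eq_zero
      intro j _
      have : r j ≠ i := fun h => hi ⟨j, h⟩
      simp [this]
    have huP : ∀ t, P.vecMul u (c t) = 0 := by
      intro t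
      have h1 : P.vecMul u (c t) = ∑ i : Fin k, u i * P i (c t) := rfl
      have h2 : ∑ i : Fin k, u i * P i (c t)
          = ∑ i : Fin k, ∑ j, (if r j = i then v j * P i (c t) else 0) := by
        apply Finset.sum_congr rfl
        intro i _
        rw [hu]
        rw [Finset.sum_mul]
        apply Finset.sum_congr rfl
        intro j _
        split <;> simp
      have h3 : ∑ i : Fin k, ∑ j, (if r j = i then v j * P i (c t) else 0)
          = ∑ j, v j * P (r j) (c t) := by
        rw [Finset.sum_comm]
        apply Finset.sum_congr rfl
        intro j _
        simp
      have h4 : (∑ j, v j * P (r j) (c t)) = (v ᵥ* (P.submatrix r c)) t := rfl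
      rw [h1, h2, h3, h4, hvz]
      rfl
    set x : Fin k ⊕ Fin m → F := Sum.elim u (P.vecMul u) with hx
    have hxmem : x ∈ rowSpace (sysGen P) :=
      (mem_rowSpace_iff _ _).mpr ⟨u, by rw [sysGen_vecMul]⟩
    obtain ⟨j0, hj0⟩ := Function.ne_iff.mp hvne
    have hxne : x ≠ 0 := by
      intro h0
      have : x (Sum.inl (r j0)) = 0 := by rw [h0]; rfl
      rw [hx] at this
      simp only [Sum.elim_inl, hur] at this
      exact hj0 this
    have hdm : d ≤ m := by simpa using Fintype.card_le_of_injective c hcinj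
    have hnu : hammingNorm u ≤ d := by
      have hsub : (Finset.univ.filter fun i => u i ≠ 0) ⊆ Finset.univ.image r := by
        intro i hi
        simp only [Finset.mem_filter] at hi
        by_contra hcon
        have : i ∉ Set.range r := by
          intro ⟨j, hj⟩
          exact hcon (Finset.mem_image.mpr ⟨j, Finset.mem_univ j, hj⟩)
        exact hi.2 (hu0 i this)
      calc hammingNorm u ≤ (Finset.univ.image r).card := Finset.card_le_card hsub
        _ ≤ (Finset.univ : Finset (Fin d)).card := Finset.card_image_le
        _ = d := by simp
    have hnuP : hammingNorm (P.vecMul u) ≤ m - d := by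
      have hsub : (Finset.univ.filter fun j => P.vecMul u j ≠ 0)
          ⊆ Finset.univ \ Finset.univ.image c := by
        intro j hj
        simp only [Finset.mem_filter] at hj
        rw [Finset.mem_sdiff]
        refine ⟨Finset.mem_univ j, ?_⟩
        intro hcon
        rcases Finset.mem_image.mp hcon with ⟨t, _, rfl⟩
        exact hj.2 (huP t)
      calc hammingNorm (P.vecMul u)
          ≤ (Finset.univ \ Finset.univ.image c).card := Finset.card_le_card hsub
        _ = m - (Finset.univ.image c).card := by
            rw [Finset.card_sdiff_of_subset (Finset.subset_univ _), Finset.card_univ, Fintype.card_fin]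
        _ = m - d := by
            rw [Finset.card_image_of_injective _ hcinj, Finset.card_univ, Fintype.card_fin]
    have hxnorm : hammingNorm x ≤ m := by
      rw [hx, hammingNorm_sum_elim]
      omega
    have hle : dmin (rowSpace (sysGen P)) ≤ hammingNorm x :=
      Nat.sInf_le ⟨x, hxmem, hxne, rfl⟩
    omega
  · -- every square submatrix nonsingular → MDS
    intro hP
    set i0 : Fin k := ⟨0, hk⟩ with hi0
    set u0 : Fin k → F := Pi.single i0 1 with hu0
    have hP1 : ∀ i j, P i j ≠ 0 := by
      intro i j
      have := hP 1 one_pos (fun _ => i) (fun _ => j)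
        (Function.injective_of_subsingleton _) (Function.injective_of_subsingleton _)
      simpa [Matrix.det_fin_one] using this
    have hu0P : P.vecMul u0 = P i0 := by
      funext j
      simp [hu0, Matrix.vecMul, dotProduct, Pi.single_apply]
    set x0 : Fin k ⊕ Fin m → F := Sum.elim u0 (P.vecMul u0) with hx0
    have hx0mem : x0 ∈ rowSpace (sysGen P) :=
      (mem_rowSpace_iff _ _).mpr ⟨u0, by rw [sysGen_vecMul]⟩
    have hx0ne : x0 ≠ 0 := by
      intro h0
      have : x0 (Sum.inl i0) = 0 := by rw [h0]; rfl
      simp [hx0, hu0] at this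
    have hnormu0 : hammingNorm u0 = 1 := by
      have hfil : (Finset.univ.filter fun i => u0 i ≠ 0) = {i0} := by
        ext i
        simp [hu0, Pi.single_apply]
      rw [hammingNorm, hfil, Finset.card_singleton]
    have hnormu0P : hammingNorm (P.vecMul u0) = m := by
      rw [hu0P, hammingNorm]
      rw [Finset.filter_true_of_mem (fun j _ => hP1 i0 j)]
      simp
    have hx0norm : hammingNorm x0 = m + 1 := by
      rw [hx0, hammingNorm_sum_elim, hnormu0, hnormu0P, add_comm]
    apply le_antisymm
    · exact Nat.sInf_le ⟨x0, hx0mem, hx0ne, hx0norm⟩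
    · have hne : {d | ∃ x ∈ rowSpace (sysGen P), x ≠ 0 ∧ hammingNorm x = d}.Nonempty :=
        ⟨m + 1, ⟨x0, hx0mem, hx0ne, hx0norm⟩⟩
      apply le_csInf hne
      rintro b ⟨x, hxmem, hxne, rfl⟩
      obtain ⟨u, rfl⟩ := (mem_rowSpace_iff _ _).mp hxmem
      rw [sysGen_vecMul] at hxne ⊢
      have hune : u ≠ 0 := by
        intro h0
        apply hxne
        funext i
        cases i with
        | inl i => simp [h0]
        | inr j => simp [h0, Matrix.vecMul]
      rw [hammingNorm_sum_elim]
      exact weight_lower P hP u hune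
end

section
/- Let C be an (n,k) MDS linear code over F with systematic generator matrix G = [I_k | P], and let a ≥ 1 and f ≥ 1 be integers with f·a ≤ n − k. Let A_0, A_1, …, A_{f−1} be pairwise disjoint sets ('faults'), each consisting of a entries of P, all lying in one fixed row i* of P. For 0 ≤ j ≤ f, let C_j be the row space of the matrix obtained from G by replacing by 0 all entries in A_0 ∪ … ∪ A_{j−1}. Then the minimum composite distance satisfies d_min(C_j) + j = n − k + 1 − j·(a − 1) for every 0 ≤ j ≤ f; in particular, if a ≥ 2 then the map j ↦ d_min(C_j) + j is strictly decreasing on {0, 1, …, f}, and if a = 1 it is constant. -/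
open Matrix

lemma myHN_sum {F : Type*} [Field F] [DecidableEq F] {α β : Type*} [Fintype α] [Fintype β]
    (x : α ⊕ β → F) :
    hammingNorm x = hammingNorm (x ∘ Sum.inl) + hammingNorm (x ∘ Sum.inr) := by
  classical
  simp only [hammingNorm]
  rw [← Finset.card_disjSum]
  congr 1
  ext s
  cases s <;>
    simp [Finset.inl_mem_disjSum, Finset.inr_mem_disjSum, Finset.mem_disjSum]

lemma myDminEq {F : Type*} [Field F] [DecidableEq F] {ι : Type*} [Fintype ι]
    (C : Submodule F (ι → F)) (d : ℕ)
    (hmem : ∃ x ∈ C, x ≠ 0 ∧ hammingNorm x = d)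
    (hlb : ∀ x ∈ C, x ≠ 0 → d ≤ hammingNorm x) : dmin C = d := by
  refine le_antisymm (Nat.sInf_le hmem) (le_csInf ⟨d, hmem⟩ ?_)
  rintro b ⟨x, hx, hne, rfl⟩
  exact hlb x hx hne

lemma mySumInl {F : Type*} [Field F] [DecidableEq F] {k m : ℕ}
    (Q : Matrix (Fin k) (Fin m) F) (c : Fin k → F) (s : Fin k) :
    (∑ r, c r • sysGen Q r) (Sum.inl s) = c s := by
  simp [sysGen, Finset.sum_apply, Matrix.one_apply, mul_ite, Finset.sum_ite_eq']

lemma mySumInr {F : Type*} [Field F] [DecidableEq F] {k m : ℕ}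
    (Q : Matrix (Fin k) (Fin m) F) (c : Fin k → F) (t : Fin m) :
    (∑ r, c r • sysGen Q r) (Sum.inr t) = ∑ r, c r * Q r t := by
  simp [sysGen, Finset.sum_apply]

lemma myKey {F : Type*} [Field F] [DecidableEq F] {k m : ℕ}
    (P : Matrix (Fin k) (Fin m) F)
    (hMDS : dmin (rowSpace (sysGen P)) = m + 1) (istar : Fin k)
    (B : Finset (Fin m)) :
    dmin (rowSpace (sysGen (fun r c => if r = istar ∧ c ∈ B then 0 else P r c)))
      = m + 1 - B.card := by
  classical
  set P' : Matrix (Fin k) (Fin m) F :=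
    fun r c => if r = istar ∧ c ∈ B then 0 else P r c with hP'
  have hBm : B.card ≤ m := by simpa using Finset.card_le_univ B
  have hLB : ∀ y ∈ rowSpace (sysGen P), y ≠ 0 → m + 1 ≤ hammingNorm y := by
    intro y hy hne
    rw [← hMDS]
    exact Nat.sInf_le ⟨y, hy, hne, rfl⟩
  -- every entry of row istar of P is nonzero
  have hPne : ∀ t, P istar t ≠ 0 := by
    have hrow : sysGen P istar ∈ rowSpace (sysGen P) :=
      Submodule.subset_span ⟨istar, rfl⟩
    have hrowne : sysGen P istar ≠ 0 := by
      intro h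
      have := congrFun h (Sum.inl istar)
      simp [sysGen, Matrix.one_apply] at this
    have hge := hLB _ hrow hrowne
    rw [myHN_sum] at hge
    have hinl : hammingNorm (sysGen P istar ∘ Sum.inl) ≤ 1 := by
      simp only [hammingNorm]
      have hsub : ({s | (sysGen P istar ∘ Sum.inl) s ≠ 0} : Finset (Fin k)) ⊆ {istar} := by
        intro s hs
        simp only [Finset.mem_filter, Finset.mem_univ, true_and, Function.comp,
          sysGen, Matrix.fromCols_apply_inl, Matrix.one_apply, ne_eq,
          ite_eq_right_iff, not_forall] at hs
        simp [hs.1.symm]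
      simpa using Finset.card_le_card hsub
    have hinr : hammingNorm (sysGen P istar ∘ Sum.inr) ≤ m := by
      simp only [hammingNorm]
      simpa using Finset.card_le_univ ({t | (sysGen P istar ∘ Sum.inr) t ≠ 0} : Finset (Fin m))
    have heq : hammingNorm (sysGen P istar ∘ Sum.inr) = m := by omega
    have huniv : ({t | (sysGen P istar ∘ Sum.inr) t ≠ 0} : Finset (Fin m)) = Finset.univ := by
      apply Finset.eq_univ_of_card
      simpa [hammingNorm] using heq
    intro t
    have := Finset.mem_univ t
    rw [← huniv, Finset.mem_filter] at this
    simpa [sysGen] using this.2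
  -- the witness codeword: row istar of the faulty generator
  have hx0mem : sysGen P' istar ∈ rowSpace (sysGen P') :=
    Submodule.subset_span ⟨istar, rfl⟩
  have hx0ne : sysGen P' istar ≠ 0 := by
    intro h
    have := congrFun h (Sum.inl istar)
    simp [sysGen, Matrix.one_apply] at this
  have hx0norm : hammingNorm (sysGen P' istar) = m + 1 - B.card := by
    rw [myHN_sum]
    have hinl : hammingNorm (sysGen P' istar ∘ Sum.inl) = 1 := by
      simp only [hammingNorm]
      rw [show ({s | (sysGen P' istar ∘ Sum.inl) s ≠ 0} : Finset (Fin k)) = {istar} from ?_]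
      · simp
      · ext s
        simp [sysGen, Matrix.one_apply]
        tauto
    have hinr : hammingNorm (sysGen P' istar ∘ Sum.inr) = m - B.card := by
      simp only [hammingNorm]
      rw [show ({t | (sysGen P' istar ∘ Sum.inr) t ≠ 0} : Finset (Fin m)) = Bᶜ from ?_]
      · simp [Finset.card_compl]
      · ext t
        by_cases ht : t ∈ B <;> simp [sysGen, Matrix.fromCols, hP', ht, hPne t]
    omega
  refine myDminEq _ _ ⟨sysGen P' istar, hx0mem, hx0ne, hx0norm⟩ ?_
  -- lower bound
  intro x hx hne
  obtain ⟨c, hc⟩ := (Submodule.mem_span_range_iff_exists_fun F).mp hx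
  set y : (Fin k ⊕ Fin m) → F := ∑ r, c r • sysGen P r with hy
  have hymem : y ∈ rowSpace (sysGen P) :=
    Submodule.sum_mem _ fun r _ =>
      Submodule.smul_mem _ _ (Submodule.subset_span ⟨r, rfl⟩)
  have hyinl : ∀ s, y (Sum.inl s) = c s := mySumInl P c
  have hxinl : ∀ s, x (Sum.inl s) = c s := by
    intro s; rw [← hc]; exact mySumInl P' c s
  have hyne : y ≠ 0 := by
    intro h
    apply hne
    have hc0 : ∀ s, c s = 0 := by
      intro s; rw [← hyinl s, h]; rfl
    rw [← hc]
    funext u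
    simp [Finset.sum_apply, hc0]
  have hgy := hLB y hymem hyne
  have hdiff : hammingNorm (y - x) ≤ B.card := by
    rw [myHN_sum]
    have h1 : hammingNorm ((y - x) ∘ Sum.inl) = 0 := by
      rw [hammingNorm_eq_zero]
      funext s
      simp [hyinl s, hxinl s]
    have h2 : hammingNorm ((y - x) ∘ Sum.inr) ≤ B.card := by
      simp only [hammingNorm]
      refine Finset.card_le_card ?_
      intro t ht
      simp only [Finset.mem_filter, Finset.mem_univ, true_and, Function.comp,
        Pi.sub_apply, ne_eq] at ht
      by_contra htB
      apply ht
      have hyt : y (Sum.inr t) = ∑ r, c r * P r t := mySumInr P c t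
      have hxt : x (Sum.inr t) = ∑ r, c r * P' r t := by
        rw [← hc]; exact mySumInr P' c t
      have hPP : ∀ r, P' r t = P r t := by
        intro r
        simp [hP', htB]
      rw [hyt, hxt]
      simp [hPP]
    omega
  have htri : hammingNorm y ≤ hammingNorm (y - x) + hammingNorm x := by
    have := hammingDist_triangle y x 0
    rw [hammingDist_zero_right, hammingDist_zero_right, hammingDist_eq_hammingNorm] at this
    rw [← hammingDist_eq_hammingNorm, hammingDist_comm, hammingDist_eq_hammingNorm, neg_add_eq_sub] at this
    omega
  omega

lemma myCardFilterLt (f j : ℕ) (hj : j ≤ f) :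
    ((Finset.univ : Finset (Fin f)).filter fun i : Fin f => (i : ℕ) < j).card = j := by
  rw [show ((Finset.univ : Finset (Fin f)).filter fun i : Fin f => (i : ℕ) < j)
      = Finset.map (Fin.castLEEmb hj) Finset.univ from ?_]
  · simp
  · ext i
    simp only [Finset.mem_filter, Finset.mem_univ, true_and, Finset.mem_map,
      Fin.castLEEmb, Function.Embedding.coeFn_mk]
    constructor
    · intro h
      exact ⟨⟨(i : ℕ), h⟩, by ext; simp⟩
    · rintro ⟨b, rfl⟩
      simpa using b.isLt


/-- If `f` pairwise disjoint faults, each zeroing `a` entries of `P`, all occur in a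
single row of `P`, then the minimum composite distance after `j` faults equals
`n − k + 1 − j·(a − 1)`; in particular it is strictly decreasing in the number of
faults when `a ≥ 2`, and constant when `a = 1`. -/
theorem composite_distance_single_row_faults {F : Type*} [Field F] [DecidableEq F]
    {k m : ℕ} (P : Matrix (Fin k) (Fin m) F)
    (hMDS : dmin (rowSpace (sysGen P)) = m + 1)
    (a f : ℕ) (ha : 1 ≤ a) (hf : 1 ≤ f) (hfa : f * a ≤ m)
    (istar : Fin k) (A : Fin f → Finset (Fin m))
    (hcard : ∀ i, (A i).card = a)
    (hdisj : ∀ i j, i ≠ j → Disjoint (A i) (A j)) :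
    let C : ℕ → Submodule F ((Fin k ⊕ Fin m) → F) := fun j =>
      rowSpace (sysGen (fun r c =>
        if r = istar ∧ c ∈ (Finset.univ.filter fun i : Fin f => (i : ℕ) < j).biUnion A
        then 0 else P r c))
    (∀ j ≤ f, dmin (C j) + j = m + 1 - j * (a - 1)) ∧
      (2 ≤ a → ∀ i j, i < j → j ≤ f → dmin (C j) + j < dmin (C i) + i) ∧
      (a = 1 → ∀ i j, i ≤ f → j ≤ f → dmin (C i) + i = dmin (C j) + j) := by
  intro C
  have hdj : ∀ j ≤ f, dmin (C j) = m + 1 - j * a := by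
    intro j hj
    have hB : ((Finset.univ.filter fun i : Fin f => (i : ℕ) < j).biUnion A).card = j * a := by
      rw [Finset.card_biUnion (fun i _ i' _ hne => hdisj i i' hne)]
      rw [Finset.sum_congr rfl fun i _ => hcard i, Finset.sum_const, smul_eq_mul,
        myCardFilterLt f j hj]
    have := myKey P hMDS istar ((Finset.univ.filter fun i : Fin f => (i : ℕ) < j).biUnion A)
    rw [hB] at this
    exact this
  have hform : ∀ j ≤ f, dmin (C j) + j = m + 1 - j * (a - 1) := by
    intro j hj
    have h1 := hdj j hj
    have hja : j * a ≤ m := le_trans (Nat.mul_le_mul_right a hj) hfa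
    have hsplit : j * (a - 1) + j = j * a := by
      conv_rhs => rw [show a = (a - 1) + 1 by omega]
      ring
    omega
  refine ⟨hform, ?_, ?_⟩
  · intro ha2 i j hij hjf
    have hi := hform i (by omega)
    have hj := hform j hjf
    have hlt : i * (a - 1) < j * (a - 1) :=
      Nat.mul_lt_mul_of_lt_of_le hij (le_refl (a - 1)) (by omega)
    have hja : j * a ≤ m := le_trans (Nat.mul_le_mul_right a hjf) hfa
    have hsplit : j * (a - 1) + j = j * a := by
      conv_rhs => rw [show a = (a - 1) + 1 by omega]
      ring
    omega
  · intro ha1 i j hif hjf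
    have hi := hform i hif
    have hj := hform j hjf
    simp only [ha1] at hi hj
    omega
end

section
/- In the GDNC setup with M ≥ 2, suppose the matrix P has a zero entry in an immune position, i.e., P[r, c] = 0 for some row index r and column index c with cb(c) = rb(r). Then there exists a set S of faults with d_min(C(S)) + |S| < M + k2; indeed, for S_r = {(i, r) : i ∈ {1,…,M}, i ≠ rb(r)} one has d_min(C(S_r)) ≤ k2 and hence d_min(C(S_r)) + |S_r| ≤ M + k2 − 1. -/
open Matrix

/-- GDNC setup: row `r` of `P` belongs to user block `r / k1`, column `c` to user
block `c / k2`.  A fault `(i, r)` (with `i < M` and `i ≠ r / k1`) zeroes the entries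
of row `r` lying in column block `i`.  `faultyP M k1 k2 P S` is the faulty parity
matrix `P_S` resulting from the set of faults `S`. -/
def faultyP {F : Type*} [Field F] (M k1 k2 : ℕ)
    (P : Matrix (Fin (M * k1)) (Fin (M * k2)) F)
    (S : Finset (ℕ × Fin (M * k1))) : Matrix (Fin (M * k1)) (Fin (M * k2)) F :=
  fun r c => if ((c : ℕ) / k2, r) ∈ S then 0 else P r c

/-- `S` is a set of faults: each element `(i, r)` has `i ∈ {0, …, M−1}` a user index
different from the block `r / k1` of row `r`. -/
def IsFaultSet (M k1 : ℕ) (S : Finset (ℕ × Fin (M * k1))) : Prop :=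
  ∀ p ∈ S, p.1 < M ∧ (p.2 : ℕ) / k1 ≠ p.1

/-- If the network matrix `P` has a zero entry in an immune position (`P[r,c] = 0`
with `cb(c) = rb(r)`), then maximum diversity fails: for the set `S_r` of all faults
affecting row `r` one has `d_min(C(S_r)) ≤ k2`, so
`d_min(C(S_r)) + |S_r| ≤ M + k2 − 1`, and in particular some fault set `S` gives
`d_min(C(S)) + |S| < M + k2`. -/
theorem composite_distance_lt_of_zero_immune_entry {F : Type*} [Field F] [DecidableEq F]
    (M k1 k2 : ℕ) (hM : 2 ≤ M) (hk1 : 1 ≤ k1) (hk2 : 1 ≤ k2)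
    (P : Matrix (Fin (M * k1)) (Fin (M * k2)) F)
    (r : Fin (M * k1)) (c : Fin (M * k2))
    (hblock : (c : ℕ) / k2 = (r : ℕ) / k1) (hzero : P r c = 0) :
    let Sr : Finset (ℕ × Fin (M * k1)) :=
      ((Finset.range M).filter fun i => i ≠ (r : ℕ) / k1).image fun i => (i, r)
    dmin (rowSpace (sysGen (faultyP M k1 k2 P Sr))) ≤ k2 ∧
      dmin (rowSpace (sysGen (faultyP M k1 k2 P Sr))) + Sr.card ≤ M + k2 - 1 ∧
      ∃ S : Finset (ℕ × Fin (M * k1)), IsFaultSet M k1 S ∧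
        dmin (rowSpace (sysGen (faultyP M k1 k2 P S))) + S.card < M + k2 := by
  intro Sr
  -- membership in Sr
  have hmemSr : ∀ i : ℕ, ∀ r' : Fin (M * k1),
      ((i, r') ∈ Sr ↔ i < M ∧ i ≠ (r : ℕ) / k1 ∧ r' = r) := by
    intro i r'
    simp only [Sr, Finset.mem_image, Finset.mem_filter, Finset.mem_range, Prod.mk.injEq]
    constructor
    · rintro ⟨j, ⟨hj, hj'⟩, rfl, rfl⟩; exact ⟨hj, hj', rfl⟩
    · rintro ⟨h1, h2, rfl⟩; exact ⟨i, ⟨h1, h2⟩, rfl, rfl⟩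
  -- the codeword: row r of the faulty generator matrix
  set x : (Fin (M * k1) ⊕ Fin (M * k2)) → F := sysGen (faultyP M k1 k2 P Sr) r with hx
  have hxinl : ∀ j, x (Sum.inl j) = if r = j then 1 else 0 := by
    intro j
    simp [hx, sysGen, Matrix.fromCols_apply_inl, Matrix.one_apply]
  have hxinr : ∀ c' : Fin (M * k2),
      x (Sum.inr c') = faultyP M k1 k2 P Sr r c' := by
    intro c'; simp [hx, sysGen, Matrix.fromCols_apply_inr]
  have hxinr0 : ∀ c' : Fin (M * k2), (c' : ℕ) / k2 ≠ (r : ℕ) / k1 →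
      x (Sum.inr c') = 0 := by
    intro c' hne
    have hlt : (c' : ℕ) / k2 < M := Nat.div_lt_of_lt_mul (by
      exact lt_of_lt_of_eq c'.isLt (Nat.mul_comm M k2))
    rw [hxinr]
    simp only [faultyP, if_pos (((hmemSr _ _).2 ⟨hlt, hne, rfl⟩))]
  have hxc : x (Sum.inr c) = 0 := by
    rw [hxinr]
    have : ((c : ℕ) / k2, r) ∉ Sr := by
      rw [hmemSr]; tauto
    simp [faultyP, this, hzero]
  have hxmem : x ∈ rowSpace (sysGen (faultyP M k1 k2 P Sr)) :=
    Submodule.subset_span ⟨r, rfl⟩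
  have hxne : x ≠ 0 := by
    intro h
    have := hxinl r
    rw [h] at this
    simp at this
  -- Hamming weight bound
  have hwt : hammingNorm x ≤ k2 := by
    have hsub : ({i | x i ≠ 0} : Finset _) ⊆
        insert (Sum.inl r) ((Finset.univ.filter
          fun c' : Fin (M * k2) => (c' : ℕ) / k2 = (r : ℕ) / k1 ∧ c' ≠ c).image Sum.inr) := by
      intro j hj
      rw [Finset.mem_filter] at hj
      rcases j with j | j
      · have : r = j := by
          by_contra h
          exact hj.2 (by rw [hxinl, if_neg h])
        simp [this]
      · rw [Finset.mem_insert, Finset.mem_image]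
        right
        refine ⟨j, ?_, rfl⟩
        rw [Finset.mem_filter]
        refine ⟨Finset.mem_univ _, ?_, ?_⟩
        · by_contra h; exact hj.2 (hxinr0 j h)
        · rintro rfl; exact hj.2 hxc
    have hcard1 : (Finset.univ.filter
        fun c' : Fin (M * k2) => (c' : ℕ) / k2 = (r : ℕ) / k1 ∧ c' ≠ c).card ≤ k2 - 1 := by
      have hsub2 : (Finset.univ.filter
          fun c' : Fin (M * k2) => (c' : ℕ) / k2 = (r : ℕ) / k1 ∧ c' ≠ c) ⊆
          (Finset.univ.filter
            fun c' : Fin (M * k2) => (c' : ℕ) / k2 = (r : ℕ) / k1).erase c := by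
        intro j hj
        rw [Finset.mem_filter] at hj
        exact Finset.mem_erase.2 ⟨hj.2.2, Finset.mem_filter.2 ⟨Finset.mem_univ _, hj.2.1⟩⟩
      have hcard2 : (Finset.univ.filter
          fun c' : Fin (M * k2) => (c' : ℕ) / k2 = (r : ℕ) / k1).card ≤ k2 := by
        refine le_trans ?_ (le_of_eq (Finset.card_range k2))
        refine Finset.card_le_card_of_injOn (fun c' : Fin (M * k2) => (c' : ℕ) % k2)
          (fun a _ => Finset.mem_range.2 (Nat.mod_lt _ (by omega))) ?_
        intro a ha b hb hab
        rw [Finset.coe_filter, Set.mem_setOf_eq] at ha hb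
        have ha' := ha.2; have hb' := hb.2
        have : (a : ℕ) = (b : ℕ) := by
          conv_lhs => rw [← Nat.div_add_mod (a : ℕ) k2]
          conv_rhs => rw [← Nat.div_add_mod (b : ℕ) k2]
          rw [ha', hb']
          have hab' : (a : ℕ) % k2 = (b : ℕ) % k2 := hab
          omega
        exact Fin.ext this
      have hc : c ∈ (Finset.univ.filter
          fun c' : Fin (M * k2) => (c' : ℕ) / k2 = (r : ℕ) / k1) :=
        Finset.mem_filter.2 ⟨Finset.mem_univ _, hblock⟩
      calc _ ≤ _ := Finset.card_le_card hsub2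
        _ = _ - 1 := Finset.card_erase_of_mem hc
        _ ≤ k2 - 1 := by omega
    calc hammingNorm x ≤ _ := Finset.card_le_card hsub
      _ ≤ 1 + (Finset.univ.filter
          fun c' : Fin (M * k2) => (c' : ℕ) / k2 = (r : ℕ) / k1 ∧ c' ≠ c).card := by
            refine le_trans (Finset.card_insert_le _ _) ?_
            rw [Nat.add_comm]
            exact Nat.add_le_add_left Finset.card_image_le 1
      _ ≤ k2 := by omega
  have hdmin : dmin (rowSpace (sysGen (faultyP M k1 k2 P Sr))) ≤ k2 :=
    le_trans (Nat.sInf_le ⟨x, hxmem, hxne, rfl⟩) hwt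
  -- cardinality of Sr
  have hcardSr : Sr.card = M - 1 := by
    have hinj : Function.Injective (fun i : ℕ => (i, r)) := by
      intro a b hab; simpa using congrArg Prod.fst hab
    rw [Finset.card_image_of_injective _ hinj, Finset.filter_ne',
      Finset.card_erase_of_mem (Finset.mem_range.2 (Nat.div_lt_of_lt_mul (by
        exact lt_of_lt_of_eq r.isLt (Nat.mul_comm M k1)))), Finset.card_range]
  refine ⟨hdmin, by omega, Sr, ?_, by omega⟩
  intro p hp
  rcases p with ⟨i, r'⟩
  rw [hmemSr] at hp
  obtain ⟨h1, h2, rfl⟩ := hp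
  exact ⟨h1, fun h => h2 h.symm⟩
end
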